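/- arXiv:1906.09869 — 2 statements merged into one kernel-verified Lean document; each statement's English description precedes it below -/
import Mathlib

section
/- Let t be a positive integer. The set Ξ(t) = {ξ mod 2t : ξ² ≡ 1 mod 4t} forms a group under multiplication modulo 2t, and this group is isomorphic to (ℤ/2ℤ)^{ν(t)}, where ν(t) is the number of distinct prime divisors of t. -/
/-!
Writing `ξ = 2e - 1`, one has `ξ² - 1 = 4e(e - 1)`, so `e ↦ 2e - 1` is a bijection from the
idempotents of `ℤ/tℤ` onto `Ξ(t)`. By the Chinese remainder theorem `ℤ/tℤ` has `2^ν(t)`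
idempotents, because `ℤ/p^kℤ` has only `0` and `1` (`p` cannot divide both `e` and `e - 1`).
Every element of `Ξ(t)` squares to `1`, so `Ξ(t)` is an `𝔽₂`-vector space of order `2^ν(t)`.
-/

theorem exists_mulEquiv_pi_multiplicative_zmod_two {G : Type*} [CommGroup G] [Finite G] {n : ℕ}
    (hG : ∀ g : G, g ^ 2 = 1) (hcard : Nat.card G = 2 ^ n) :
    Nonempty (G ≃* (Fin n → Multiplicative (ZMod 2))) := by
  let _ : Module (ZMod 2) (Additive G) := AddCommGroup.zmodModule hG
  have : Fintype (Additive G) := Fintype.ofFinite _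
  have hrank : Module.finrank (ZMod 2) (Additive G) = n := by
    have hpow := Module.card_eq_pow_finrank (K := ZMod 2) (V := Additive G)
    rw [ZMod.card, ← Nat.card_eq_fintype_card] at hpow
    exact Nat.pow_right_injective le_rfl (hpow.symm.trans hcard)
  let e : Additive G ≃ₗ[ZMod 2] (Fin n → ZMod 2) :=
    LinearEquiv.ofFinrankEq _ _ (by simp [hrank])
  exact ⟨(AddEquiv.toMultiplicativeRight e.toAddEquiv).trans (MulEquiv.funMultiplicative _ _)⟩

theorem Prod.isIdempotentElem_iff {M N : Type*} [Mul M] [Mul N] {x : M × N} :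
    IsIdempotentElem x ↔ IsIdempotentElem x.1 ∧ IsIdempotentElem x.2 :=
  Prod.ext_iff

namespace ZMod

theorem isIdempotentElem_intCast_iff {n : ℕ} {z : ℤ} :
    IsIdempotentElem (z : ZMod n) ↔ (n : ℤ) ∣ z * (z - 1) := by
  rw [← intCast_zmod_eq_zero_iff_dvd, IsIdempotentElem, ← sub_eq_zero]
  push_cast
  ring_nf

theorem isIdempotentElem_iff_of_prime_pow {p k : ℕ} (hp : p.Prime) {e : ZMod (p ^ k)} :
    IsIdempotentElem e ↔ e = 0 ∨ e = 1 := by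
  refine ⟨fun he => ?_, by rintro (rfl | rfl); exacts [.zero, .one]⟩
  obtain ⟨z, rfl⟩ := intCast_surjective e
  have hdvd : (p : ℤ) ^ k ∣ z * (z - 1) := by exact_mod_cast isIdempotentElem_intCast_iff.1 he
  have hp' : Prime (p : ℤ) := Nat.prime_iff_prime_int.mp hp
  by_cases hz : (p : ℤ) ∣ z
  · have hz1 : ¬ (p : ℤ) ∣ z - 1 := fun h => hp'.not_dvd_one (by simpa using dvd_sub hz h)
    left
    rw [intCast_zmod_eq_zero_iff_dvd]
    exact_mod_cast hp'.pow_dvd_of_dvd_mul_right k hz1 hdvd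
  · right
    rw [← Int.cast_one, intCast_eq_intCast_iff_dvd_sub, dvd_sub_comm]
    exact_mod_cast hp'.pow_dvd_of_dvd_mul_left k hz hdvd

theorem ncard_isIdempotentElem_prime_pow {p k : ℕ} (hp : p.Prime) (hk : k ≠ 0) :
    {e : ZMod (p ^ k) | IsIdempotentElem e}.ncard = 2 := by
  have : Fact (1 < p ^ k) := ⟨Nat.one_lt_pow hk hp.one_lt⟩
  simp_rw [isIdempotentElem_iff_of_prime_pow hp]
  exact Set.ncard_pair zero_ne_one

theorem ncard_isIdempotentElem_mul {m n : ℕ} (h : m.Coprime n) :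
    {e : ZMod (m * n) | IsIdempotentElem e}.ncard =
      {e : ZMod m | IsIdempotentElem e}.ncard * {e : ZMod n | IsIdempotentElem e}.ncard := by
  rw [← Set.ncard_prod]
  refine Set.ncard_congr' ((chineseRemainder h).toEquiv.subtypeEquiv fun x => ?_)
  exact ⟨fun hx => Prod.isIdempotentElem_iff.1 (hx.map (chineseRemainder h)),
    fun hx => by simpa using (Prod.isIdempotentElem_iff.2 hx).map (chineseRemainder h).symm⟩

theorem ncard_isIdempotentElem {n : ℕ} (hn : n ≠ 0) :
    {e : ZMod n | IsIdempotentElem e}.ncard = 2 ^ n.primeFactors.card := by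
  have h_one : {e : ZMod 1 | IsIdempotentElem e}.ncard = 1 :=
    Set.ncard_eq_one.2 ⟨0, Set.subsingleton_of_subsingleton.eq_singleton_of_mem .zero⟩
  rw [Nat.multiplicative_factorization (fun n => {e : ZMod n | IsIdempotentElem e}.ncard)
    (fun _ _ => ncard_isIdempotentElem_mul) h_one hn, Finsupp.prod, Nat.support_factorization,
    ← Finset.prod_const]
  refine Finset.prod_congr rfl fun p hp => ?_
  exact ncard_isIdempotentElem_prime_pow (Nat.prime_of_mem_primeFactors hp)
    (Finsupp.mem_support_iff.1 (by rwa [Nat.support_factorization]))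

end ZMod

def Xi (t : ℕ) : Set (ZMod (2 * t)) :=
  {ξ | ∀ x : ℤ, (x : ZMod (2 * t)) = ξ → 4 * (t : ℤ) ∣ x ^ 2 - 1}

section Xi

variable {t : ℕ}

theorem four_mul_dvd_sq_sub_one_iff_of_intCast_eq {x y : ℤ} (h : (x : ZMod (2 * t)) = y) :
    4 * (t : ℤ) ∣ x ^ 2 - 1 ↔ 4 * (t : ℤ) ∣ y ^ 2 - 1 := by
  obtain ⟨k, hk⟩ := (ZMod.intCast_eq_intCast_iff_dvd_sub _ _ _).1 h
  push_cast at hk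
  have hy : y ^ 2 - 1 = x ^ 2 - 1 + 4 * t * (k * x + t * k ^ 2) := by
    linear_combination (y + x + 2 * t * k) * hk
  rw [hy, dvd_add_left (dvd_mul_right _ _)]

theorem intCast_mem_Xi_iff {x : ℤ} :
    (x : ZMod (2 * t)) ∈ Xi t ↔ 4 * (t : ℤ) ∣ x ^ 2 - 1 :=
  ⟨fun h => h x rfl, fun h _ hy => (four_mul_dvd_sq_sub_one_iff_of_intCast_eq hy).2 h⟩

theorem mul_self_eq_one_of_mem_Xi {ξ : ZMod (2 * t)} (hξ : ξ ∈ Xi t) : ξ * ξ = 1 := by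
  obtain ⟨x, rfl⟩ := ZMod.intCast_surjective ξ
  rw [intCast_mem_Xi_iff] at hξ
  rw [← Int.cast_mul, ← Int.cast_one, ZMod.intCast_eq_intCast_iff_dvd_sub]
  push_cast
  rw [dvd_sub_comm, ← sq]
  exact dvd_trans ⟨2, by ring⟩ hξ

theorem mul_mem_Xi {ξ η : ZMod (2 * t)} (hξ : ξ ∈ Xi t) (hη : η ∈ Xi t) : ξ * η ∈ Xi t := by
  obtain ⟨x, rfl⟩ := ZMod.intCast_surjective ξ
  obtain ⟨y, rfl⟩ := ZMod.intCast_surjective η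
  rw [intCast_mem_Xi_iff] at hξ hη
  rw [← Int.cast_mul, intCast_mem_Xi_iff,
    show (x * y) ^ 2 - 1 = (x ^ 2 - 1) * y ^ 2 + (y ^ 2 - 1) by ring]
  exact dvd_add (dvd_mul_of_dvd_left hξ _) hη

def XiSubgroup (t : ℕ) : Subgroup (ZMod (2 * t))ˣ where
  carrier := {u | (u : ZMod (2 * t)) ∈ Xi t}
  one_mem' := by
    rw [Set.mem_ofPred_eq, Units.val_one, ← Int.cast_one, intCast_mem_Xi_iff]
    simp
  mul_mem' := mul_mem_Xi
  inv_mem' {u} hu := by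
    have hu_sq : u * u = 1 := Units.ext (mul_self_eq_one_of_mem_Xi hu)
    rwa [Set.mem_ofPred_eq, inv_eq_of_mul_eq_one_right hu_sq]

theorem exists_mem_XiSubgroup_iff {ξ : ZMod (2 * t)} :
    (∃ u ∈ XiSubgroup t, (u : ZMod (2 * t)) = ξ) ↔ ξ ∈ Xi t :=
  ⟨by rintro ⟨u, hu, rfl⟩; exact hu, fun hξ =>
    ⟨⟨ξ, ξ, mul_self_eq_one_of_mem_Xi hξ, mul_self_eq_one_of_mem_Xi hξ⟩, hξ, rfl⟩⟩

theorem natCard_XiSubgroup : Nat.card (XiSubgroup t) = (Xi t).ncard := by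
  rw [← SetLike.coe_sort_coe, Nat.card_coe_set_eq,
    ← Set.ncard_image_of_injective _ Units.val_injective]
  congr 1
  ext ξ
  exact exists_mem_XiSubgroup_iff

theorem intCast_two_mul_sub_one_eq_iff {k l : ℤ} :
    ((2 * k - 1 : ℤ) : ZMod (2 * t)) = ((2 * l - 1 : ℤ) : ZMod (2 * t)) ↔
      (k : ZMod t) = l := by
  rw [ZMod.intCast_eq_intCast_iff_dvd_sub, ZMod.intCast_eq_intCast_iff_dvd_sub,
    show 2 * l - 1 - (2 * k - 1) = 2 * (l - k) by ring]
  push_cast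
  exact mul_dvd_mul_iff_left two_ne_zero

theorem intCast_two_mul_sub_one_mem_Xi_iff {k : ℤ} :
    ((2 * k - 1 : ℤ) : ZMod (2 * t)) ∈ Xi t ↔ IsIdempotentElem (k : ZMod t) := by
  rw [intCast_mem_Xi_iff, ZMod.isIdempotentElem_intCast_iff,
    show (2 * k - 1) ^ 2 - 1 = 4 * (k * (k - 1)) by ring]
  exact mul_dvd_mul_iff_left four_ne_zero

theorem exists_intCast_two_mul_sub_one_of_mem_Xi {ξ : ZMod (2 * t)} (hξ : ξ ∈ Xi t) :
    ∃ k : ℤ, ((2 * k - 1 : ℤ) : ZMod (2 * t)) = ξ := by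
  obtain ⟨x, rfl⟩ := ZMod.intCast_surjective ξ
  rw [intCast_mem_Xi_iff] at hξ
  obtain ⟨m, rfl⟩ : Odd x := by
    simpa [Int.even_sub_one, parity_simps] using
      even_iff_two_dvd.2 (dvd_trans ⟨2 * (t : ℤ), by ring⟩ hξ)
  exact ⟨m + 1, by push_cast; ring⟩

theorem ncard_Xi : (Xi t).ncard = {e : ZMod t | IsIdempotentElem e}.ncard := by
  symm
  refine Set.ncard_congr (fun e _ => ((2 * (e.cast : ℤ) - 1 : ℤ) : ZMod (2 * t))) ?_ ?_ ?_
  · intro e (he : IsIdempotentElem e)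
    rwa [intCast_two_mul_sub_one_mem_Xi_iff, ZMod.intCast_zmod_cast]
  · intro a b _ _ hab
    rwa [intCast_two_mul_sub_one_eq_iff, ZMod.intCast_zmod_cast, ZMod.intCast_zmod_cast]
      at hab
  · intro ξ hξ
    obtain ⟨k, rfl⟩ := exists_intCast_two_mul_sub_one_of_mem_Xi hξ
    refine ⟨(k : ZMod t), intCast_two_mul_sub_one_mem_Xi_iff.1 hξ, ?_⟩
    rw [intCast_two_mul_sub_one_eq_iff, ZMod.intCast_zmod_cast]

end Xi

/-- For `t > 0`, the set `Ξ(t) = {ξ mod 2t : ξ² ≡ 1 mod 4t}` is (the underlying set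
of units of) a subgroup of `(ℤ/2tℤ)ˣ`, and this group is isomorphic to
`(ℤ/2ℤ)^{ν(t)}` where `ν(t)` is the number of distinct prime divisors of `t`. -/
theorem Xi_group_iso_elementary_two_group (t : ℕ) (ht : 0 < t) :
    ∃ H : Subgroup (ZMod (2 * t))ˣ,
      (∀ ξ : ZMod (2 * t),
        (∀ x : ℤ, (x : ZMod (2 * t)) = ξ → (4 * (t : ℤ)) ∣ x ^ 2 - 1) ↔
          ∃ u ∈ H, ((u : (ZMod (2 * t))ˣ) : ZMod (2 * t)) = ξ) ∧
      Nonempty (H ≃* (Fin t.primeFactors.card → Multiplicative (ZMod 2))) := by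
  have : NeZero t := ⟨ht.ne'⟩
  refine ⟨XiSubgroup t, fun ξ => exists_mem_XiSubgroup_iff.symm, ?_⟩
  refine exists_mulEquiv_pi_multiplicative_zmod_two (fun u => ?_) ?_
  · exact Subtype.ext (Units.ext (by simpa [sq] using mul_self_eq_one_of_mem_Xi u.2))
  · rw [natCard_XiSubgroup, ncard_Xi, ZMod.ncard_isIdempotentElem ht.ne']
end

section
/- The number of nonzero classes γ in the discriminant group D = (A_6^∨(7))^∨ / A_6^∨(7) of A_6^∨(7) whose quadratic form value satisfies q(γ) ≡ 2/7 (mod 2ℤ) is 2352. -/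
open Finset

/-- A rational number is integral. -/
def IsIntQ (q : ℚ) : Prop := ∃ n : ℤ, q = (n : ℚ)

/-- The standard scalar product on `ℚ⁷`. -/
def dotQ (x y : Fin 7 → ℚ) : ℚ := ∑ i, x i * y i

/-- The root lattice `A₆ = {x ∈ ℤ⁷ : Σ xᵢ = 0}`, inside `ℚ⁷`. -/
def A6Q : Set (Fin 7 → ℚ) := {x | (∀ i, IsIntQ (x i)) ∧ ∑ i, x i = 0}

/-- The dual lattice `A₆^∨` of `A₆` inside the span of `A₆`; as a group this is
the lattice `A₆^∨(7)` (the form being rescaled by `7`). -/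
def A6dual : Set (Fin 7 → ℚ) := {y | (∑ i, y i = 0) ∧ ∀ x ∈ A6Q, IsIntQ (dotQ y x)}

/-- The dual lattice of `A₆^∨(7)`, namely `(1/7)A₆`. -/
def oneSeventhA6 : Set (Fin 7 → ℚ) := {z | ∃ x ∈ A6Q, z = (7 : ℚ)⁻¹ • x}

/-- The condition `q(γ) ≡ 2/7 (mod 2ℤ)` on the discriminant form
`q(γ) = 7(γ,γ) mod 2ℤ` of `A₆^∨(7)`. -/
def qCond (l : Fin 7 → ℚ) : Prop := ∃ k : ℤ, 7 * dotQ l l = 2 / 7 + 2 * (k : ℚ)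

def gv (m : Fin 7 → ℤ) : Fin 7 → ℚ := fun i => (m i : ℚ) / 7

lemma isIntQ_div7 (a : ℤ) : IsIntQ ((a : ℚ)/7) ↔ (7:ℤ) ∣ a := by
  constructor
  · rintro ⟨k, hk⟩
    refine ⟨k, ?_⟩
    have : (a : ℚ) = 7 * k := by field_simp at hk; rw [hk]
    exact_mod_cast this
  · rintro ⟨b, rfl⟩
    exact ⟨b, by push_cast; ring⟩

lemma mem_A6Q_int (m : Fin 7 → ℤ) (h : ∑ i, m i = 0) :
    (fun i => (m i : ℚ)) ∈ A6Q := by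
  refine ⟨fun i => ⟨m i, rfl⟩, ?_⟩
  have : ((∑ i, m i : ℤ) : ℚ) = 0 := by rw [h]; norm_num
  simpa using this

lemma A6Q_elim {x : Fin 7 → ℚ} (hx : x ∈ A6Q) :
    ∃ m : Fin 7 → ℤ, x = (fun i => (m i : ℚ)) ∧ ∑ i, m i = 0 := by
  obtain ⟨hint, hsum⟩ := hx
  choose m hm using hint
  refine ⟨m, funext hm, ?_⟩
  have : ((∑ i, m i : ℤ) : ℚ) = 0 := by push_cast; rw [← hsum]; exact Finset.sum_congr rfl (fun i _ => (hm i).symm)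
  exact_mod_cast this

lemma dot_gv_int (m w : Fin 7 → ℤ) :
    dotQ (gv m) (fun i => (w i : ℚ)) = ((∑ i, m i * w i : ℤ) : ℚ) / 7 := by
  unfold dotQ gv
  push_cast
  rw [Finset.sum_div]
  exact Finset.sum_congr rfl (fun i _ => by ring)

lemma dual_char_mp {m : Fin 7 → ℤ} (h : gv m ∈ A6dual) :
    ∀ i, (7:ℤ) ∣ (m i - m 0) := by
  intro i
  have htv : (fun j => (((if j = i then 1 else 0) - (if j = 0 then 1 else 0) : ℤ) : ℚ)) ∈ A6Q := by
    apply mem_A6Q_int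
    simp [Finset.sum_sub_distrib]
  have := h.2 _ htv
  rw [dot_gv_int] at this
  rw [isIntQ_div7] at this
  have e : (∑ j, m j * ((if j = i then 1 else 0) - (if j = 0 then 1 else 0)) : ℤ) = m i - m 0 := by
    simp [mul_sub, Finset.sum_sub_distrib, mul_ite]
  rwa [e] at this

lemma dual_char_mpr {m : Fin 7 → ℤ} (hs : ∑ i, m i = 0)
    (h7 : ∀ i, (7:ℤ) ∣ (m i - m 0)) : gv m ∈ A6dual := by
  constructor
  · unfold gv
    rw [← Finset.sum_div]
    have : ((∑ i, m i : ℤ) : ℚ) = 0 := by rw [hs]; norm_num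
    rw [show (∑ i, ((m i : ℚ))) = ((∑ i, m i : ℤ) : ℚ) by push_cast; rfl, this]
    norm_num
  · intro x hx
    obtain ⟨w, rfl, hw⟩ := A6Q_elim hx
    rw [dot_gv_int, isIntQ_div7]
    have : (∑ i, m i * w i) = (∑ i, (m i - m 0) * w i) + m 0 * ∑ i, w i := by
      rw [Finset.mul_sum, ← Finset.sum_add_distrib]
      exact Finset.sum_congr rfl (fun i _ => by ring)
    rw [this, hw, mul_zero, add_zero]
    exact Finset.dvd_sum (fun i _ => Dvd.dvd.mul_right (h7 i) _)

lemma qCond_iff (m : Fin 7 → ℤ) :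
    qCond (gv m) ↔ ∃ k : ℤ, ∑ i, (m i)^2 = 2 + 14*k := by
  have e : 7 * dotQ (gv m) (gv m) = ((∑ i, (m i)^2 : ℤ) : ℚ) / 7 := by
    unfold dotQ gv
    push_cast
    rw [Finset.sum_div, Finset.mul_sum]
    exact Finset.sum_congr rfl (fun i _ => by ring)
  unfold qCond
  rw [e]
  constructor
  · rintro ⟨k, hk⟩
    refine ⟨k, ?_⟩
    field_simp at hk
    have : ((∑ i, (m i)^2 : ℤ) : ℚ) = ((2 + 14*k : ℤ) : ℚ) := by push_cast at hk ⊢; rw [hk]; ring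
    exact_mod_cast this
  · rintro ⟨k, hk⟩
    refine ⟨k, ?_⟩
    rw [hk]
    push_cast
    ring

lemma gv_inj {m m' : Fin 7 → ℤ} (h : gv m = gv m') : m = m' := by
  funext i
  have := congrFun h i
  unfold gv at this
  field_simp at this
  exact_mod_cast this

lemma gv_sub (m m' : Fin 7 → ℤ) : gv m - gv m' = gv (fun i => m i - m' i) := by
  funext i
  simp [gv]
  ring
lemma two_dvd_sq_sub (x : ℤ) : (2:ℤ) ∣ x^2 - x := by
  obtain ⟨r, hr⟩ := Int.even_mul_succ_self (x-1)
  exact ⟨r, by nlinarith [hr]⟩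

lemma key_mod14 (u v : Fin 7 → ℤ) (c : ℤ) (h : ∀ i, (7:ℤ) ∣ v i - c)
    (hu : ∑ i, u i = 0) (hv : ∑ i, v i = 0) :
    (14:ℤ) ∣ (∑ i, (u i + v i)^2) - ∑ i, (u i)^2 := by
  set e : Fin 7 → ℤ := fun i => (v i - c) / 7 with he
  have hv' : ∀ i, v i = c + 7 * e i := by
    intro i
    have := Int.ediv_mul_cancel (h i)
    simp only [he]
    omega
  have hsum_e : ∑ i, e i = -c := by
    have h1 : ∑ i, v i = 7*c + 7*∑ i, e i := by
      rw [Finset.sum_congr rfl (fun i _ => hv' i)]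
      rw [Finset.sum_add_distrib, Finset.sum_const, ← Finset.mul_sum]
      simp
    omega
  have key2 : ∑ i, (u i + v i)^2 =
      ∑ i, (u i)^2 - 7*c^2 + 49*(∑ i, (e i)^2) + 14*(∑ i, u i * e i) := by
    have e1 : ∑ i, (u i + v i)^2 =
        ∑ i, ((u i)^2 + c^2 + 49*(e i)^2 + 14*(u i * e i) + 2*(c*u i) + 14*(c*e i)) :=
      Finset.sum_congr rfl (fun i _ => by rw [hv' i]; ring)
    rw [e1]
    simp only [Finset.sum_add_distrib, Finset.sum_const, Finset.card_univ,
      Fintype.card_fin, ← Finset.mul_sum, nsmul_eq_mul, hu, hsum_e]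
    ring
  have parity : (2:ℤ) ∣ c^2 + ∑ i, (e i)^2 := by
    have h1 : (2:ℤ) ∣ c^2 - c := two_dvd_sq_sub c
    have h2 : (2:ℤ) ∣ ∑ i, ((e i)^2 - e i) :=
      Finset.dvd_sum (fun i _ => two_dvd_sq_sub (e i))
    have h3 : ∑ i, ((e i)^2 - e i) = (∑ i, (e i)^2) - ∑ i, e i :=
      Finset.sum_sub_distrib _ _
    rw [h3] at h2
    omega
  obtain ⟨a, ha⟩ := parity
  refine ⟨a + 3*(∑ i, (e i)^2) + (∑ i, u i * e i) - c^2, ?_⟩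
  rw [key2]
  linarith [ha]
def Pq (n : ℕ) : Prop :=
  ((n%7)^2 + (n/7%7)^2 + (n/49%7)^2 + (n/343%7)^2 + (n/2401%7)^2
    + (n%7 + n/7%7 + n/49%7 + n/343%7 + n/2401%7)^2) % 14 = 2

instance : DecidablePred Pq := fun _ => Nat.decEq _ _

lemma chunk (p : ℕ → Prop) [DecidablePred p] (a b : ℕ) :
    ((Finset.range (a+b)).filter p).card
      = ((Finset.range a).filter p).card
        + ((Finset.range b).filter (fun r => p (a + r))).card := by
  rw [Finset.range_add, Finset.filter_union,
    Finset.card_union_of_disjoint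
      (Finset.disjoint_filter_filter (Finset.disjoint_range_addLeftEmbedding a _)),
    Finset.filter_map, Finset.card_map]
  congr 1

set_option maxRecDepth 100000 in
lemma card_Pq : ((Finset.range 16807).filter Pq).card = 2352 := by
  have h1 : (16807:ℕ) = 2401 + (2401 + (2401 + (2401 + (2401 + (2401 + 2401))))) := by norm_num
  rw [h1, chunk, chunk, chunk, chunk, chunk, chunk]
  decide

def xv (n : ℕ) : Fin 7 → ℤ :=
  ![0, (n%7 : ℕ), (n/7%7 : ℕ), (n/49%7 : ℕ), (n/343%7 : ℕ), (n/2401%7 : ℕ),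
    -((n%7 : ℕ) + (n/7%7 : ℕ) + (n/49%7 : ℕ) + (n/343%7 : ℕ) + (n/2401%7 : ℕ))]

lemma xv0 (n : ℕ) : xv n 0 = 0 := rfl
lemma xv1 (n : ℕ) : xv n 1 = ((n%7 : ℕ) : ℤ) := rfl
lemma xv2 (n : ℕ) : xv n 2 = ((n/7%7 : ℕ) : ℤ) := rfl
lemma xv3 (n : ℕ) : xv n 3 = ((n/49%7 : ℕ) : ℤ) := rfl
lemma xv4 (n : ℕ) : xv n 4 = ((n/343%7 : ℕ) : ℤ) := rfl
lemma xv5 (n : ℕ) : xv n 5 = ((n/2401%7 : ℕ) : ℤ) := rfl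
lemma xv6 (n : ℕ) : xv n 6 =
    -((n%7 : ℕ) + (n/7%7 : ℕ) + (n/49%7 : ℕ) + (n/343%7 : ℕ) + (n/2401%7 : ℕ)) := rfl

lemma sum_xv (n : ℕ) : ∑ i, xv n i = 0 := by
  rw [Fin.sum_univ_seven, xv0, xv1, xv2, xv3, xv4, xv5, xv6]
  ring

lemma sum_sq_xv (n : ℕ) : ∑ i, (xv n i)^2 =
    (((n%7)^2 + (n/7%7)^2 + (n/49%7)^2 + (n/343%7)^2 + (n/2401%7)^2
      + (n%7 + n/7%7 + n/49%7 + n/343%7 + n/2401%7)^2 : ℕ) : ℤ) := by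
  rw [Fin.sum_univ_seven, xv0, xv1, xv2, xv3, xv4, xv5, xv6]
  push_cast
  ring

lemma mem_oneSeventh (n : ℕ) : gv (xv n) ∈ oneSeventhA6 := by
  refine ⟨fun i => ((xv n i : ℤ) : ℚ), mem_A6Q_int _ (sum_xv n), ?_⟩
  funext i
  show (xv n i : ℚ) / 7 = (7:ℚ)⁻¹ * (xv n i)
  ring

lemma not_dual {n : ℕ} (hP : Pq n) : gv (xv n) ∉ A6dual := by
  intro h
  have hd := dual_char_mp h
  have h1 := hd 1; have h2 := hd 2; have h3 := hd 3; have h4 := hd 4; have h5 := hd 5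
  rw [xv1, xv0, sub_zero] at h1
  rw [xv2, xv0, sub_zero] at h2
  rw [xv3, xv0, sub_zero] at h3
  rw [xv4, xv0, sub_zero] at h4
  rw [xv5, xv0, sub_zero] at h5
  unfold Pq at hP
  have e1 : n % 7 = 0 := by omega
  have e2 : n / 7 % 7 = 0 := by omega
  have e3 : n / 49 % 7 = 0 := by omega
  have e4 : n / 343 % 7 = 0 := by omega
  have e5 : n / 2401 % 7 = 0 := by omega
  rw [e1, e2, e3, e4, e5] at hP
  norm_num at hP

lemma qCond_of {n : ℕ} (hP : Pq n) : qCond (gv (xv n)) := by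
  rw [qCond_iff]
  unfold Pq at hP
  obtain ⟨k, hk⟩ : ∃ k : ℕ, ((n%7)^2 + (n/7%7)^2 + (n/49%7)^2 + (n/343%7)^2 + (n/2401%7)^2
      + (n%7 + n/7%7 + n/49%7 + n/343%7 + n/2401%7)^2) = 2 + 14*k := by
    refine ⟨(((n%7)^2 + (n/7%7)^2 + (n/49%7)^2 + (n/343%7)^2 + (n/2401%7)^2
      + (n%7 + n/7%7 + n/49%7 + n/343%7 + n/2401%7)^2)) / 14, by omega⟩
  refine ⟨k, ?_⟩
  rw [sum_sq_xv, hk]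
  push_cast
  ring

lemma n_eq_of_dvd {n n' : ℕ} (hn : n < 16807) (hn' : n' < 16807)
    (h : ∀ i, (7:ℤ) ∣ xv n i - xv n' i) : n = n' := by
  have h1 := h 1; have h2 := h 2; have h3 := h 3; have h4 := h 4; have h5 := h 5
  rw [xv1, xv1] at h1
  rw [xv2, xv2] at h2
  rw [xv3, xv3] at h3
  rw [xv4, xv4] at h4
  rw [xv5, xv5] at h5
  omega

/-- There are exactly `2352` (nonzero) classes `γ` in the discriminant group
`(1/7)A₆ / A₆^∨(7)` of `A₆^∨(7)` with `q(γ) ≡ 2/7 (mod 2ℤ)`: there is a set of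
`2352` representatives in `(1/7)A₆`, pairwise incongruent modulo `A₆^∨(7)`,
each a nonzero class satisfying the norm condition, and every element of
`(1/7)A₆` in a nonzero class satisfying the norm condition is congruent to one
of them. -/
theorem card_classes_norm_two_sevenths :
    ∃ T : Finset (Fin 7 → ℚ),
      T.card = 2352 ∧
      (∀ l ∈ T, l ∈ oneSeventhA6 ∧ l ∉ A6dual ∧ qCond l) ∧
      (∀ l ∈ T, ∀ l' ∈ T, l ≠ l' → l - l' ∉ A6dual) ∧
      (∀ l ∈ oneSeventhA6, l ∉ A6dual → qCond l → ∃ l' ∈ T, l - l' ∈ A6dual) := by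
  refine ⟨((Finset.range 16807).filter Pq).image (fun n => gv (xv n)), ?_, ?_, ?_, ?_⟩
  · rw [Finset.card_image_of_injOn, card_Pq]
    intro n hn n' hn' hne
    simp only [Finset.coe_filter, Finset.mem_range, Set.mem_setOf_eq] at hn hn'
    have hx : xv n = xv n' := gv_inj hne
    exact n_eq_of_dvd hn.1 hn'.1 (fun i => by rw [hx]; simp)
  · intro l hl
    obtain ⟨n, hn, rfl⟩ := Finset.mem_image.mp hl
    rw [Finset.mem_filter] at hn
    exact ⟨mem_oneSeventh n, not_dual hn.2, qCond_of hn.2⟩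
  · intro l hl l' hl' hne hmem
    obtain ⟨n, hn, rfl⟩ := Finset.mem_image.mp hl
    obtain ⟨n', hn', rfl⟩ := Finset.mem_image.mp hl'
    rw [Finset.mem_filter, Finset.mem_range] at hn hn'
    rw [gv_sub] at hmem
    have hd := dual_char_mp hmem
    have hdd : ∀ i, (7:ℤ) ∣ xv n i - xv n' i := by
      intro i
      have := hd i
      simp only [xv0, sub_zero] at this
      exact this
    exact hne (by rw [n_eq_of_dvd hn.1 hn'.1 hdd])
  · intro l hl hnd hq
    obtain ⟨x, hx, rfl⟩ := hl
    obtain ⟨m, rfl, hm⟩ := A6Q_elim hx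
    have hgl : (7:ℚ)⁻¹ • (fun i => ((m i : ℤ) : ℚ)) = gv m := by
      funext i
      show (7:ℚ)⁻¹ * (m i) = (m i : ℚ) / 7
      ring
    rw [hgl] at hq ⊢
    -- digits
    have hm7 : m 0 + m 1 + m 2 + m 3 + m 4 + m 5 + m 6 = 0 := by
      rw [Fin.sum_univ_seven] at hm; exact hm
    set D1 := ((m 1 - m 0) % 7).toNat with hD1def
    set D2 := ((m 2 - m 0) % 7).toNat with hD2def
    set D3 := ((m 3 - m 0) % 7).toNat with hD3def
    set D4 := ((m 4 - m 0) % 7).toNat with hD4def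
    set D5 := ((m 5 - m 0) % 7).toNat with hD5def
    have hD1 : (D1:ℤ) = (m 1 - m 0) % 7 := Int.toNat_of_nonneg (Int.emod_nonneg _ (by norm_num))
    have hD2 : (D2:ℤ) = (m 2 - m 0) % 7 := Int.toNat_of_nonneg (Int.emod_nonneg _ (by norm_num))
    have hD3 : (D3:ℤ) = (m 3 - m 0) % 7 := Int.toNat_of_nonneg (Int.emod_nonneg _ (by norm_num))
    have hD4 : (D4:ℤ) = (m 4 - m 0) % 7 := Int.toNat_of_nonneg (Int.emod_nonneg _ (by norm_num))
    have hD5 : (D5:ℤ) = (m 5 - m 0) % 7 := Int.toNat_of_nonneg (Int.emod_nonneg _ (by norm_num))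
    set n := D1 + 7*D2 + 49*D3 + 343*D4 + 2401*D5 with hndef
    have hb1 : D1 < 7 := by omega
    have hb2 : D2 < 7 := by omega
    have hb3 : D3 < 7 := by omega
    have hb4 : D4 < 7 := by omega
    have hb5 : D5 < 7 := by omega
    have hnlt : n < 16807 := by omega
    have hg1 : n % 7 = D1 := by omega
    have hg2 : n / 7 % 7 = D2 := by omega
    have hg3 : n / 49 % 7 = D3 := by omega
    have hg4 : n / 343 % 7 = D4 := by omega
    have hg5 : n / 2401 % 7 = D5 := by omega
    have hcong : ∀ i, (7:ℤ) ∣ (m i - xv n i) - m 0 := by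
      intro i
      fin_cases i
      · show (7:ℤ) ∣ m 0 - xv n 0 - m 0; rw [xv0]; omega
      · show (7:ℤ) ∣ m 1 - xv n 1 - m 0; rw [xv1, hg1]; omega
      · show (7:ℤ) ∣ m 2 - xv n 2 - m 0; rw [xv2, hg2]; omega
      · show (7:ℤ) ∣ m 3 - xv n 3 - m 0; rw [xv3, hg3]; omega
      · show (7:ℤ) ∣ m 4 - xv n 4 - m 0; rw [xv4, hg4]; omega
      · show (7:ℤ) ∣ m 5 - xv n 5 - m 0; rw [xv5, hg5]; omega
      · show (7:ℤ) ∣ m 6 - xv n 6 - m 0; rw [xv6, hg1, hg2, hg3, hg4, hg5]; omega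
    have hsv : ∑ i, (m i - xv n i) = 0 := by
      rw [Finset.sum_sub_distrib, hm, sum_xv]
      ring
    obtain ⟨k, hk⟩ := (qCond_iff m).mp hq
    have h14 := key_mod14 (xv n) (fun i => m i - xv n i) (m 0) hcong (sum_xv n) hsv
    have e : ∑ i, (xv n i + (m i - xv n i))^2 = ∑ i, (m i)^2 :=
      Finset.sum_congr rfl (fun i _ => by ring)
    rw [e, hk, sum_sq_xv] at h14
    have hPn : Pq n := by unfold Pq; omega
    refine ⟨gv (xv n), Finset.mem_image.mpr ⟨n, Finset.mem_filter.mpr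
      ⟨Finset.mem_range.mpr hnlt, hPn⟩, rfl⟩, ?_⟩
    rw [gv_sub]
    refine dual_char_mpr hsv ?_
    intro i
    have := hcong i
    simpa [xv0] using this
end
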